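/- arXiv:1612.08588 — 2 statements merged into one kernel-verified Lean document; each statement's English description precedes it below -/
import Mathlib

section
/- Let n be a positive integer, let p1, p2 be linearly independent vectors in ℤ^n with all entries positive, let r ∈ ℤ^n, and let k1, k2 be integers. Let M1, M2 be positive integers, set a2 = M2·p2 + r and a1 = M1·p1 + a2. Let B = {x ∈ ℝ^n : 0 ≤ x_j ≤ 1 for all j}. Assume β'2, β2 are real numbers with sup{a2·x : x ∈ B, p1·x = k1+1, p2·x ≤ k2} < β'2 ≤ β2 < inf{a2·x : x ∈ B, p1·x = k1+1, p2·x ≥ k2+1} (these sets being nonempty). Set β'1 = β'2 + (k1+1)·M1 and β1 = β2 + (k1+1)·M1. Then every x ∈ B satisfying β'1 ≤ a1·x ≤ β1 and p1·x = k1+1 also satisfies k2 < p2·x < k2+1; in particular, no integer vector x ∈ {0,1}^n satisfies β'1 ≤ a1·x ≤ β1 and p1·x = k1+1. -/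
/-!
On the hyperplane `p1 · x = k1 + 1` we have `a1 · x = (k1 + 1) M1 + a2 · x`, so the window
`β'1 ≤ a1 · x ≤ β1` is exactly the window `β'2 ≤ a2 · x ≤ β2`. A point of the box in that window
cannot satisfy `p2 · x ≤ k2`, since then `a2 · x` would be at most the supremum over `S3`, which is
below `β'2`; symmetrically it cannot satisfy `p2 · x ≥ k2 + 1`. Hence `p2 · x` lies strictly between
two consecutive integers, which is impossible for a `0/1` vector.
-/

open Finset

section UnitBox

variable {ι : Type*}

lemma setOf_forall_mem_unitInterval_eq_Icc :
    {x : ι → ℝ | ∀ j, 0 ≤ x j ∧ x j ≤ 1} = Set.Icc 0 1 := by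
  ext x
  simp only [Set.mem_ofPred_eq, Set.mem_Icc, Pi.le_def, Pi.zero_apply, Pi.one_apply, forall_and]

lemma isCompact_setOf_forall_mem_unitInterval :
    IsCompact {x : ι → ℝ | ∀ j, 0 ≤ x j ∧ x j ≤ 1} :=
  setOf_forall_mem_unitInterval_eq_Icc (ι := ι) ▸ isCompact_Icc

lemma intCast_mem_setOf_forall_mem_unitInterval {x : ι → ℤ} (hx : ∀ j, x j = 0 ∨ x j = 1) :
    (fun j => (x j : ℝ)) ∈ {x : ι → ℝ | ∀ j, 0 ≤ x j ∧ x j ≤ 1} := by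
  intro j
  rcases hx j with h | h <;> simp [h]

lemma sum_intCast_mul_add_mul [Fintype ι] (c d : ι → ℤ) (M : ℤ) (x : ι → ℝ) :
    ∑ i, ((M * c i + d i : ℤ) : ℝ) * x i = M * ∑ i, (c i : ℝ) * x i + ∑ i, (d i : ℝ) * x i := by
  simp only [mul_sum, ← sum_add_distrib]
  refine sum_congr rfl fun i _ => ?_
  push_cast
  ring

end UnitBox

section CompactSupInf

variable {E : Type*} [TopologicalSpace E] {K : Set E} {p : E → Prop} {f : E → ℝ} {x : E}

lemma le_csSup_image_sep_of_isCompact (hK : IsCompact K) (hf : Continuous f) (hx : x ∈ K)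
    (hp : p x) : f x ≤ sSup (f '' {x ∈ K | p x}) :=
  le_csSup ((hK.bddAbove_image hf.continuousOn).mono (Set.image_mono (Set.sep_subset K p)))
    ⟨x, ⟨hx, hp⟩, rfl⟩

lemma csInf_image_sep_le_of_isCompact (hK : IsCompact K) (hf : Continuous f) (hx : x ∈ K)
    (hp : p x) : sInf (f '' {x ∈ K | p x}) ≤ f x :=
  csInf_le ((hK.bddBelow_image hf.continuousOn).mono (Set.image_mono (Set.sep_subset K p)))
    ⟨x, ⟨hx, hp⟩, rfl⟩

end CompactSupInf

lemma Int.cast_notMem_Ioo_add_one (k m : ℤ) : (m : ℝ) ∉ Set.Ioo (k : ℝ) (k + 1) := by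
  rintro ⟨hlo, hhi⟩
  norm_cast at hlo hhi
  omega

theorem ckp_branch_integer_infeasible_general (n : ℕ)
    (p1 p2 : Fin n → ℤ)
    (k1 k2 : ℤ) (M1 : ℤ)
    (a2 : Fin n → ℤ)
    (a1 : Fin n → ℤ) (ha1 : a1 = fun i => M1 * p1 i + a2 i)
    (B : Set (Fin n → ℝ)) (hB : B = {x | ∀ j, 0 ≤ x j ∧ x j ≤ 1})
    (S3 S4 : Set (Fin n → ℝ))
    (hS3 : S3 = {x ∈ B | ∑ i, (p1 i : ℝ) * x i = (k1 : ℝ) + 1 ∧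
      ∑ i, (p2 i : ℝ) * x i ≤ (k2 : ℝ)})
    (hS4 : S4 = {x ∈ B | ∑ i, (p1 i : ℝ) * x i = (k1 : ℝ) + 1 ∧
      (k2 : ℝ) + 1 ≤ ∑ i, (p2 i : ℝ) * x i})
    (β'2 β2 : ℝ)
    (hsup : sSup ((fun x => ∑ i, (a2 i : ℝ) * x i) '' S3) < β'2)
    (hinf : β2 < sInf ((fun x => ∑ i, (a2 i : ℝ) * x i) '' S4))
    (β'1 β1 : ℝ)
    (hβ'1 : β'1 = β'2 + ((k1 : ℝ) + 1) * (M1 : ℝ))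
    (hβ1 : β1 = β2 + ((k1 : ℝ) + 1) * (M1 : ℝ)) :
    (∀ x ∈ B, β'1 ≤ ∑ i, (a1 i : ℝ) * x i → ∑ i, (a1 i : ℝ) * x i ≤ β1 →
      ∑ i, (p1 i : ℝ) * x i = (k1 : ℝ) + 1 →
      (k2 : ℝ) < ∑ i, (p2 i : ℝ) * x i ∧ ∑ i, (p2 i : ℝ) * x i < (k2 : ℝ) + 1) ∧
    ¬ ∃ x : Fin n → ℤ, (∀ j, x j = 0 ∨ x j = 1) ∧
      β'1 ≤ ∑ i, (a1 i : ℝ) * (x i : ℝ) ∧ ∑ i, (a1 i : ℝ) * (x i : ℝ) ≤ β1 ∧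
      ∑ i, (p1 i : ℝ) * (x i : ℝ) = (k1 : ℝ) + 1 := by
  subst ha1 hB hS3 hS4 hβ'1 hβ1
  have hK := isCompact_setOf_forall_mem_unitInterval (ι := Fin n)
  have ha2_cont : Continuous fun x : Fin n → ℝ => ∑ i, (a2 i : ℝ) * x i := by fun_prop
  have hfrac : ∀ x ∈ {x : Fin n → ℝ | ∀ j, 0 ≤ x j ∧ x j ≤ 1},
      β'2 + ((k1 : ℝ) + 1) * M1 ≤ ∑ i, ((M1 * p1 i + a2 i : ℤ) : ℝ) * x i →
      ∑ i, ((M1 * p1 i + a2 i : ℤ) : ℝ) * x i ≤ β2 + ((k1 : ℝ) + 1) * M1 →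
      ∑ i, (p1 i : ℝ) * x i = k1 + 1 →
      (k2 : ℝ) < ∑ i, (p2 i : ℝ) * x i ∧ ∑ i, (p2 i : ℝ) * x i < k2 + 1 := by
    intro x hx hlo hhi hp1
    rw [sum_intCast_mul_add_mul, hp1] at hlo hhi
    have ha2_lo : β'2 ≤ ∑ i, (a2 i : ℝ) * x i := by linarith
    have ha2_hi : ∑ i, (a2 i : ℝ) * x i ≤ β2 := by linarith
    constructor
    · by_contra! hp2
      exact (hsup.trans_le ha2_lo).not_ge
        (le_csSup_image_sep_of_isCompact hK ha2_cont hx ⟨hp1, hp2⟩)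
    · by_contra! hp2
      exact (ha2_hi.trans_lt hinf).not_ge
        (csInf_image_sep_le_of_isCompact hK ha2_cont hx ⟨hp1, hp2⟩)
  refine ⟨hfrac, ?_⟩
  rintro ⟨x, hx01, hlo, hhi, hp1⟩
  have hp2 := hfrac _ (intCast_mem_setOf_forall_mem_unitInterval hx01) hlo hhi hp1
  exact Int.cast_notMem_Ioo_add_one k2 (∑ i, p2 i * x i) (by push_cast; exact hp2)

theorem ckp_branch_integer_infeasible (n : ℕ) (hn : 0 < n)
    (p1 p2 r : Fin n → ℤ)
    (hp1pos : ∀ i, 0 < p1 i) (hp2pos : ∀ i, 0 < p2 i)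
    (hli : LinearIndependent ℤ ![p1, p2])
    (k1 k2 : ℤ) (M1 M2 : ℤ) (hM1 : 0 < M1) (hM2 : 0 < M2)
    (a2 : Fin n → ℤ) (ha2 : a2 = fun i => M2 * p2 i + r i)
    (a1 : Fin n → ℤ) (ha1 : a1 = fun i => M1 * p1 i + a2 i)
    (B : Set (Fin n → ℝ)) (hB : B = {x | ∀ j, 0 ≤ x j ∧ x j ≤ 1})
    (S3 S4 : Set (Fin n → ℝ))
    (hS3 : S3 = {x ∈ B | ∑ i, (p1 i : ℝ) * x i = (k1 : ℝ) + 1 ∧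
      ∑ i, (p2 i : ℝ) * x i ≤ (k2 : ℝ)})
    (hS4 : S4 = {x ∈ B | ∑ i, (p1 i : ℝ) * x i = (k1 : ℝ) + 1 ∧
      (k2 : ℝ) + 1 ≤ ∑ i, (p2 i : ℝ) * x i})
    (hS3ne : S3.Nonempty) (hS4ne : S4.Nonempty)
    (β'2 β2 : ℝ)
    (hsup : sSup ((fun x => ∑ i, (a2 i : ℝ) * x i) '' S3) < β'2)
    (hββ : β'2 ≤ β2)
    (hinf : β2 < sInf ((fun x => ∑ i, (a2 i : ℝ) * x i) '' S4))
    (β'1 β1 : ℝ)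
    (hβ'1 : β'1 = β'2 + ((k1 : ℝ) + 1) * (M1 : ℝ))
    (hβ1 : β1 = β2 + ((k1 : ℝ) + 1) * (M1 : ℝ)) :
    (∀ x ∈ B, β'1 ≤ ∑ i, (a1 i : ℝ) * x i → ∑ i, (a1 i : ℝ) * x i ≤ β1 →
      ∑ i, (p1 i : ℝ) * x i = (k1 : ℝ) + 1 →
      (k2 : ℝ) < ∑ i, (p2 i : ℝ) * x i ∧ ∑ i, (p2 i : ℝ) * x i < (k2 : ℝ) + 1) ∧
    ¬ ∃ x : Fin n → ℤ, (∀ j, x j = 0 ∨ x j = 1) ∧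
      β'1 ≤ ∑ i, (a1 i : ℝ) * (x i : ℝ) ∧ ∑ i, (a1 i : ℝ) * (x i : ℝ) ≤ β1 ∧
      ∑ i, (p1 i : ℝ) * (x i : ℝ) = (k1 : ℝ) + 1 :=
  ckp_branch_integer_infeasible_general n p1 p2 k1 k2 M1 a2 a1 ha1 B hB S3 S4 hS3 hS4 β'2 β2 hsup
    hinf β'1 β1 hβ'1 hβ1
end

section
/- Let n be a positive integer, let p1 ∈ ℤ^n have all entries positive, let a2 ∈ ℝ^n, let k1 be an integer, and let M1 be a positive real number. Let B = {x ∈ ℝ^n : 0 ≤ x_j ≤ 1 for all j}. Let β'2 ≤ β2 be real numbers such that M1 > sup{a2·x : x ∈ B, p1·x ≤ k1} − β'2 and M1 > β2 − inf{a2·x : x ∈ B, p1·x ≥ k1+2} (whenever the respective sets are nonempty). Set a1 = M1·p1 + a2, β'1 = β'2 + (k1+1)·M1, and β1 = β2 + (k1+1)·M1. Then every x ∈ B with β'1 ≤ a1·x ≤ β1 satisfies k1 < p1·x < k1+2; in particular, the only integer value that p1·x can take on the LP relaxation of the cascade knapsack problem is k1+1. -/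
/-!
Write `a1·x = M1 (p1·x) + a2·x`. If `p1·x ≤ k1`, then `a2·x` is at most the supremum in the
hypothesis, which is below `M1 + β'2`, so `a1·x < M1 k1 + M1 + β'2 = β'1`. Symmetrically,
`p1·x ≥ k1 + 2` forces `a1·x > β1`. Integrality of `k1 < p1·x < k1 + 2` leaves `k1 + 1`.
-/

open Finset

section Penalty

variable {X : Type*} {C : Set X} {f g : X → ℝ} {k M β : ℝ} {x : X}

theorem lt_of_sSup_sub_lt (hg : BddAbove (g '' C)) (hM : 0 ≤ M)
    (hsup : {y ∈ C | f y ≤ k}.Nonempty → sSup (g '' {y ∈ C | f y ≤ k}) - β < M)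
    (hx : x ∈ C) (hlo : β + (k + 1) * M ≤ M * f x + g x) : k < f x := by
  by_contra! hfx
  have hmem : x ∈ {y ∈ C | f y ≤ k} := ⟨hx, hfx⟩
  have hgx : g x ≤ sSup (g '' {y ∈ C | f y ≤ k}) :=
    le_csSup (hg.mono (Set.image_mono (Set.sep_subset _ _))) ⟨x, hmem, rfl⟩
  have := hsup ⟨x, hmem⟩
  have := mul_le_mul_of_nonneg_left hfx hM
  linarith

theorem lt_of_sub_sInf_lt (hg : BddBelow (g '' C)) (hM : 0 ≤ M)
    (hinf : {y ∈ C | k ≤ f y}.Nonempty → β - sInf (g '' {y ∈ C | k ≤ f y}) < M)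
    (hx : x ∈ C) (hhi : M * f x + g x ≤ β + (k - 1) * M) : f x < k := by
  by_contra! hfx
  have hmem : x ∈ {y ∈ C | k ≤ f y} := ⟨hx, hfx⟩
  have hgx : sInf (g '' {y ∈ C | k ≤ f y}) ≤ g x :=
    csInf_le (hg.mono (Set.image_mono (Set.sep_subset _ _))) ⟨x, hmem, rfl⟩
  have := hinf ⟨x, hmem⟩
  have := mul_le_mul_of_nonneg_left hfx hM
  linarith

end Penalty

theorem unitBox_eq_Icc {ι : Type*} :
    {x : ι → ℝ | ∀ j, 0 ≤ x j ∧ x j ≤ 1} = Set.Icc 0 1 := by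
  ext x
  simp [Pi.le_def, forall_and]

theorem ckp_root_branching_general (n : ℕ)
    (p1 : Fin n → ℤ)
    (a2 : Fin n → ℝ) (k1 : ℤ) (M1 : ℝ) (hM1 : 0 < M1)
    (B : Set (Fin n → ℝ)) (hB : B = {x | ∀ j, 0 ≤ x j ∧ x j ≤ 1})
    (β'2 β2 : ℝ)
    (hM1lo : {x ∈ B | ∑ i, (p1 i : ℝ) * x i ≤ (k1 : ℝ)}.Nonempty →
      sSup ((fun x => ∑ i, a2 i * x i) ''
        {x ∈ B | ∑ i, (p1 i : ℝ) * x i ≤ (k1 : ℝ)}) - β'2 < M1)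
    (hM1hi : {x ∈ B | (k1 : ℝ) + 2 ≤ ∑ i, (p1 i : ℝ) * x i}.Nonempty →
      β2 - sInf ((fun x => ∑ i, a2 i * x i) ''
        {x ∈ B | (k1 : ℝ) + 2 ≤ ∑ i, (p1 i : ℝ) * x i}) < M1)
    (a1 : Fin n → ℝ) (ha1 : a1 = fun i => M1 * (p1 i : ℝ) + a2 i)
    (β'1 β1 : ℝ)
    (hβ'1 : β'1 = β'2 + ((k1 : ℝ) + 1) * M1)
    (hβ1 : β1 = β2 + ((k1 : ℝ) + 1) * M1) :
    ∀ x ∈ B, β'1 ≤ ∑ i, a1 i * x i → ∑ i, a1 i * x i ≤ β1 →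
      ((k1 : ℝ) < ∑ i, (p1 i : ℝ) * x i ∧ ∑ i, (p1 i : ℝ) * x i < (k1 : ℝ) + 2) ∧
      ∀ m : ℤ, ∑ i, (p1 i : ℝ) * x i = (m : ℝ) → m = k1 + 1 := by
  intro x hx hlo hhi
  have hsplit : ∑ i, a1 i * x i = M1 * ∑ i, (p1 i : ℝ) * x i + ∑ i, a2 i * x i := by
    simp only [ha1, add_mul, sum_add_distrib, mul_sum, mul_assoc]
  have hcompact : IsCompact B := hB ▸ unitBox_eq_Icc ▸ isCompact_Icc
  have hcont : ContinuousOn (fun y => ∑ i, a2 i * y i) B := by fun_prop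
  have hgt : (k1 : ℝ) < ∑ i, (p1 i : ℝ) * x i :=
    lt_of_sSup_sub_lt (f := fun y => ∑ i, (p1 i : ℝ) * y i)
      (hcompact.bddAbove_image hcont) hM1.le hM1lo hx (by linarith)
  have hlt : ∑ i, (p1 i : ℝ) * x i < (k1 : ℝ) + 2 :=
    lt_of_sub_sInf_lt (f := fun y => ∑ i, (p1 i : ℝ) * y i)
      (hcompact.bddBelow_image hcont) hM1.le hM1hi hx (by linarith)
  refine ⟨⟨hgt, hlt⟩, fun m hm => ?_⟩
  rw [hm] at hgt hlt
  have : k1 < m ∧ m < k1 + 2 := ⟨by exact_mod_cast hgt, by exact_mod_cast hlt⟩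
  omega

theorem ckp_root_branching (n : ℕ) (hn : 0 < n)
    (p1 : Fin n → ℤ) (hp1pos : ∀ i, 0 < p1 i)
    (a2 : Fin n → ℝ) (k1 : ℤ) (M1 : ℝ) (hM1 : 0 < M1)
    (B : Set (Fin n → ℝ)) (hB : B = {x | ∀ j, 0 ≤ x j ∧ x j ≤ 1})
    (β'2 β2 : ℝ) (hββ : β'2 ≤ β2)
    (hM1lo : {x ∈ B | ∑ i, (p1 i : ℝ) * x i ≤ (k1 : ℝ)}.Nonempty →
      sSup ((fun x => ∑ i, a2 i * x i) ''
        {x ∈ B | ∑ i, (p1 i : ℝ) * x i ≤ (k1 : ℝ)}) - β'2 < M1)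
    (hM1hi : {x ∈ B | (k1 : ℝ) + 2 ≤ ∑ i, (p1 i : ℝ) * x i}.Nonempty →
      β2 - sInf ((fun x => ∑ i, a2 i * x i) ''
        {x ∈ B | (k1 : ℝ) + 2 ≤ ∑ i, (p1 i : ℝ) * x i}) < M1)
    (a1 : Fin n → ℝ) (ha1 : a1 = fun i => M1 * (p1 i : ℝ) + a2 i)
    (β'1 β1 : ℝ)
    (hβ'1 : β'1 = β'2 + ((k1 : ℝ) + 1) * M1)
    (hβ1 : β1 = β2 + ((k1 : ℝ) + 1) * M1) :
    ∀ x ∈ B, β'1 ≤ ∑ i, a1 i * x i → ∑ i, a1 i * x i ≤ β1 →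
      ((k1 : ℝ) < ∑ i, (p1 i : ℝ) * x i ∧ ∑ i, (p1 i : ℝ) * x i < (k1 : ℝ) + 2) ∧
      ∀ m : ℤ, ∑ i, (p1 i : ℝ) * x i = (m : ℝ) → m = k1 + 1 :=
  ckp_root_branching_general n p1 a2 k1 M1 hM1 B hB β'2 β2 hM1lo hM1hi a1 ha1 β'1 β1 hβ'1 hβ1
end
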